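/- Let ρ and σ be positive definite d×d density matrices. Then the Umegaki relative entropy has the integral representation S(ρ‖σ) = ∫₀^∞ Tr[ ( (tI+σ)^{−1} − (tI+ρ)^{−1} ) ρ ] dt, where I is the d×d identity matrix and the inverses are matrix inverses. -/

import Mathlib

open Matrix ComplexOrder

/-- The trace norm of a complex matrix: the sum of its singular values,
realized as `Tr √(Aᴴ A)`. -/
noncomputable def traceNorm {d : ℕ} (A : Matrix (Fin d) (Fin d) ℂ) : ℝ :=
  (((Matrix.posSemidef_conjTranspose_mul_self A).1.eigenvectorUnitary.1 *
      diagonal (fun i => ((√((Matrix.posSemidef_conjTranspose_mul_self A).1.eigenvalues i) : ℝ) : ℂ)) *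
      (star (Matrix.posSemidef_conjTranspose_mul_self A).1.eigenvectorUnitary :
        Matrix (Fin d) (Fin d) ℂ)).trace).re

/-- Functional calculus for a Hermitian matrix: apply `f` to the eigenvalues in an
orthonormal eigenbasis. -/
noncomputable def matFun {d : ℕ} {A : Matrix (Fin d) (Fin d) ℂ} (hA : A.IsHermitian)
    (f : ℝ → ℝ) : Matrix (Fin d) (Fin d) ℂ :=
  (hA.eigenvectorUnitary : Matrix (Fin d) (Fin d) ℂ) *
    Matrix.diagonal (fun i => (f (hA.eigenvalues i) : ℂ)) *
    (star hA.eigenvectorUnitary : Matrix (Fin d) (Fin d) ℂ)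

/-- `f : (0,∞) → ℝ` is operator monotone decreasing: for all positive definite matrices
`A ≤ B` (Loewner order) of any size, `f(B) ≤ f(A)`. -/
def OpMonoDecrOn (f : ℝ → ℝ) : Prop :=
  ∀ (n : ℕ) (A B : Matrix (Fin n) (Fin n) ℂ) (hA : A.PosDef) (hB : B.PosDef),
    (B - A).PosSemidef → (matFun hA.1 f - matFun hB.1 f).PosSemidef

/-- The quasi-relative entropy `S_f(ρ‖σ) = Σ_{j,k} λ_j f(μ_k/λ_j) |⟨φ_k|ψ_j⟩|²` computed from
spectral decompositions `ρ = Σ_j λ_j |ψ_j⟩⟨ψ_j|`, `σ = Σ_k μ_k |φ_k⟩⟨φ_k|`. -/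
noncomputable def quasiRelEntropy {d : ℕ} (f : ℝ → ℝ) {ρ σ : Matrix (Fin d) (Fin d) ℂ}
    (hρ : ρ.IsHermitian) (hσ : σ.IsHermitian) : ℝ :=
  ∑ j, ∑ k, hρ.eigenvalues j * f (hσ.eigenvalues k / hρ.eigenvalues j) *
    ‖(inner ℂ (hσ.eigenvectorBasis k) (hρ.eigenvectorBasis j) : ℂ)‖ ^ 2

/-- The Umegaki relative entropy `S(ρ‖σ) = Tr(ρ (log ρ − log σ))`. -/
noncomputable def relEntropy {d : ℕ} {ρ σ : Matrix (Fin d) (Fin d) ℂ}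
    (hρ : ρ.IsHermitian) (hσ : σ.IsHermitian) : ℝ :=
  ((ρ * (matFun hρ Real.log - matFun hσ Real.log)).trace).re

/-- The Tsallis relative q-entropy `S_q(ρ‖σ) = (1/(1−q))(1 − Tr(ρ^q σ^{1−q}))`. -/
noncomputable def tsallisEntropy {d : ℕ} (q : ℝ) {ρ σ : Matrix (Fin d) (Fin d) ℂ}
    (hρ : ρ.IsHermitian) (hσ : σ.IsHermitian) : ℝ :=
  (1 / (1 - q)) *
    (1 - ((matFun hρ (fun x => x ^ q) * matFun hσ (fun x => x ^ (1 - q))).trace).re)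

/-!
Diagonalize `ρ = ∑ⱼ λⱼ |uⱼ⟩⟨uⱼ|` and `σ = ∑ₖ μₖ |vₖ⟩⟨vₖ|` and put `wⱼₖ = |⟨vₖ, uⱼ⟩|²`, so that
`∑ₖ wⱼₖ = 1` for every `j`. Then `S(ρ‖σ) = ∑ⱼₖ λⱼ wⱼₖ (log λⱼ - log μₖ)` and the integrand at `t`
is `∑ⱼₖ λⱼ wⱼₖ ((t + μₖ)⁻¹ - (t + λⱼ)⁻¹)`, so the claim reduces termwise to
`∫₀^∞ ((t + μ)⁻¹ - (t + λ)⁻¹) dt = log λ - log μ`, whose antiderivative is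
`log (t + μ) - log (t + λ)`.
-/

open MeasureTheory Real Filter Set Topology

lemma tendsto_log_add_sub_log_add (a b : ℝ) :
    Tendsto (fun t : ℝ => log (t + a) - log (t + b)) atTop (𝓝 0) := by
  simpa using (tendsto_log_comp_add_sub_log a).sub (tendsto_log_comp_add_sub_log b)

lemma hasDerivAt_log_add_sub_log_add {a b x : ℝ} (ha : 0 < x + a) (hb : 0 < x + b) :
    HasDerivAt (fun t : ℝ => log (t + a) - log (t + b)) ((x + a)⁻¹ - (x + b)⁻¹) x := by
  simpa [one_div] using (((hasDerivAt_id x).add_const a).log ha.ne').fun_sub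
    (((hasDerivAt_id x).add_const b).log hb.ne')

lemma integrableOn_Ioi_inv_add_sub_inv_add {a b : ℝ} (ha : 0 < a) (hb : 0 < b) :
    IntegrableOn (fun t : ℝ => (t + a)⁻¹ - (t + b)⁻¹) (Ioi 0) := by
  have hderiv (x : ℝ) (hx : x ∈ Ici 0) := hasDerivAt_log_add_sub_log_add (x := x) (a := a)
    (b := b) (by linarith [hx.out]) (by linarith [hx.out])
  rcases le_total a b with hab | hab
  · refine integrableOn_Ioi_deriv_of_nonneg' hderiv (fun x hx => ?_)
      (tendsto_log_add_sub_log_add a b)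
    have := hx.out
    exact sub_nonneg.2 (inv_anti₀ (by positivity) (by linarith))
  · refine integrableOn_Ioi_deriv_of_nonpos' hderiv (fun x hx => ?_)
      (tendsto_log_add_sub_log_add a b)
    have := hx.out
    exact sub_nonpos.2 (inv_anti₀ (by positivity) (by linarith))

lemma integral_Ioi_inv_add_sub_inv_add {a b : ℝ} (ha : 0 < a) (hb : 0 < b) :
    ∫ t in Ioi 0, ((t + a)⁻¹ - (t + b)⁻¹) = log b - log a := by
  rw [integral_Ioi_of_hasDerivAt_of_tendsto'
    (fun x hx => hasDerivAt_log_add_sub_log_add (by linarith [hx.out]) (by linarith [hx.out]))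
    (integrableOn_Ioi_inv_add_sub_inv_add ha hb) (tendsto_log_add_sub_log_add a b)]
  simp

lemma integral_Ioi_sum_sum_mul_inv_add_sub_inv_add {ι κ : Type*} [Fintype ι] [Fintype κ]
    (c : ι → κ → ℝ) {a : ι → ℝ} {b : κ → ℝ} (ha : ∀ i, 0 < a i) (hb : ∀ k, 0 < b k) :
    ∫ t in Ioi 0, ∑ i, ∑ k, c i k * ((t + b k)⁻¹ - (t + a i)⁻¹) =
      ∑ i, ∑ k, c i k * (log (a i) - log (b k)) := by
  have hint (i : ι) (k : κ) :=
    (integrableOn_Ioi_inv_add_sub_inv_add (hb k) (ha i)).const_mul (c i k)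
  rw [integral_finsetSum _ fun i _ => integrable_finsetSum _ fun k _ => hint i k]
  refine Finset.sum_congr rfl fun i _ => ?_
  rw [integral_finsetSum _ fun k _ => hint i k]
  refine Finset.sum_congr rfl fun k _ => ?_
  rw [integral_const_mul, integral_Ioi_inv_add_sub_inv_add (hb k) (ha i)]

lemma trace_diagonal_mul_star_mul_diagonal_mul {n : Type*} [Fintype n] [DecidableEq n]
    (a b : n → ℂ) (W : Matrix n n ℂ) :
    (diagonal a * star W * diagonal b * W).trace = ∑ j, ∑ k, a j * b k * ‖W k j‖ ^ 2 := by
  refine Finset.sum_congr rfl fun j _ => Finset.sum_congr rfl fun k _ => ?_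
  dsimp only
  rw [mul_diagonal, diagonal_mul, star_apply, Complex.star_def, ← Complex.conj_mul']
  ring

section MatFun

variable {d : ℕ} {A B : Matrix (Fin d) (Fin d) ℂ}

lemma matFun_eq_cfc (hA : A.IsHermitian) (f : ℝ → ℝ) : matFun hA f = cfc f A := by
  rw [hA.cfc_eq, IsHermitian.cfc, Unitary.conjStarAlgAut_apply]
  rfl

lemma matFun_id (hA : A.IsHermitian) : matFun hA id = A := by
  rw [matFun_eq_cfc, cfc_id ℝ A]

lemma inv_smul_one_add_eq_matFun (hA : A.IsHermitian) {t : ℝ}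
    (ht : ∀ i, t + hA.eigenvalues i ≠ 0) :
    ((t : ℂ) • (1 : Matrix (Fin d) (Fin d) ℂ) + A)⁻¹ = matFun hA (fun x => (t + x)⁻¹) := by
  have hspec : ∀ x ∈ spectrum ℝ A, t + x ≠ 0 := by
    rw [hA.spectrum_real_eq_range_eigenvalues]
    rintro _ ⟨i, rfl⟩
    exact ht i
  rw [matFun_eq_cfc, cfc_inv (fun x => t + x) A hspec, cfc_const_add t (fun x => x) A,
    cfc_id' ℝ A, Algebra.algebraMap_eq_smul_one, ← Complex.coe_smul, nonsing_inv_eq_ringInverse]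

lemma star_eigenvectorUnitary_mul_eigenvectorUnitary_apply (hA : A.IsHermitian)
    (hB : B.IsHermitian) (k j : Fin d) :
    (star (hB.eigenvectorUnitary : Matrix (Fin d) (Fin d) ℂ) * hA.eigenvectorUnitary) k j =
      inner ℂ (hB.eigenvectorBasis k) (hA.eigenvectorBasis j) := by
  simp [Matrix.mul_apply, PiLp.inner_apply, mul_comm]

lemma trace_matFun_mul_matFun (hA : A.IsHermitian) (hB : B.IsHermitian) (f g : ℝ → ℝ) :
    (matFun hA f * matFun hB g).trace = ∑ j, ∑ k, ((f (hA.eigenvalues j) * g (hB.eigenvalues k) *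
      ‖inner ℂ (hB.eigenvectorBasis k) (hA.eigenvectorBasis j)‖ ^ 2 : ℝ) : ℂ) := by
  rw [matFun, matFun]
  set U : Matrix (Fin d) (Fin d) ℂ := (hA.eigenvectorUnitary : Matrix (Fin d) (Fin d) ℂ)
  set V : Matrix (Fin d) (Fin d) ℂ := (hB.eigenvectorUnitary : Matrix (Fin d) (Fin d) ℂ)
  have hcycle : (U * diagonal (fun j => (f (hA.eigenvalues j) : ℂ)) * star U *
        (V * diagonal (fun k => (g (hB.eigenvalues k) : ℂ)) * star V)).trace =
      (diagonal (fun j => (f (hA.eigenvalues j) : ℂ)) * star (star V * U) *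
        diagonal (fun k => (g (hB.eigenvalues k) : ℂ)) * (star V * U)).trace := by
    rw [star_mul, star_star]
    simp only [Matrix.mul_assoc]
    rw [trace_mul_comm]
    simp only [Matrix.mul_assoc]
  rw [hcycle, trace_diagonal_mul_star_mul_diagonal_mul]
  simp only [U, V, star_eigenvectorUnitary_mul_eigenvectorUnitary_apply, Complex.ofReal_mul,
    Complex.ofReal_pow]

lemma trace_matFun_mul_matFun_self (hA : A.IsHermitian) (f g : ℝ → ℝ) :
    (matFun hA f * matFun hA g).trace =
      ∑ j, ((f (hA.eigenvalues j) * g (hA.eigenvalues j) : ℝ) : ℂ) := by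
  have hinner := orthonormal_iff_ite.1 hA.eigenvectorBasis.orthonormal
  simp [trace_matFun_mul_matFun, hinner, apply_ite]

lemma re_trace_mul_matFun_sub_matFun (hA : A.IsHermitian) (hB : B.IsHermitian) (g : ℝ → ℝ) :
    ((A * (matFun hA g - matFun hB g)).trace).re = ∑ j, ∑ k, hA.eigenvalues j *
      ‖inner ℂ (hB.eigenvectorBasis k) (hA.eigenvectorBasis j)‖ ^ 2 *
        (g (hA.eigenvalues j) - g (hB.eigenvalues k)) := by
  have hparseval (j : Fin d) :
      ∑ k, ‖inner ℂ (hB.eigenvectorBasis k) (hA.eigenvectorBasis j)‖ ^ 2 = 1 := by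
    rw [hB.eigenvectorBasis.sum_sq_norm_inner_right, hA.eigenvectorBasis.orthonormal.1 j, one_pow]
  nth_rw 1 [← matFun_id hA]
  rw [mul_sub, trace_sub]
  simp only [trace_matFun_mul_matFun_self, trace_matFun_mul_matFun, Complex.sub_re,
    Complex.re_sum, Complex.ofReal_re, id, ← Finset.sum_sub_distrib]
  refine Finset.sum_congr rfl fun j _ => ?_
  rw [← mul_one (_ * g _), ← hparseval j, Finset.mul_sum, ← Finset.sum_sub_distrib]
  refine Finset.sum_congr rfl fun k _ => ?_
  ring

lemma re_trace_resolvent_sub_resolvent_mul {ρ σ : Matrix (Fin d) (Fin d) ℂ} (hρ : ρ.PosDef)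
    (hσ : σ.PosDef) {t : ℝ} (ht : 0 ≤ t) :
    (((((t : ℂ) • (1 : Matrix (Fin d) (Fin d) ℂ) + σ)⁻¹ -
        ((t : ℂ) • (1 : Matrix (Fin d) (Fin d) ℂ) + ρ)⁻¹) * ρ).trace).re =
      ∑ j, ∑ k, hρ.1.eigenvalues j *
        ‖inner ℂ (hσ.1.eigenvectorBasis k) (hρ.1.eigenvectorBasis j)‖ ^ 2 *
          ((t + hσ.1.eigenvalues k)⁻¹ - (t + hρ.1.eigenvalues j)⁻¹) := by
  have hσt i := (add_pos_of_nonneg_of_pos ht (hσ.eigenvalues_pos i)).ne'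
  have hρt i := (add_pos_of_nonneg_of_pos ht (hρ.eigenvalues_pos i)).ne'
  rw [inv_smul_one_add_eq_matFun hσ.1 hσt, inv_smul_one_add_eq_matFun hρ.1 hρt, trace_mul_comm,
    ← neg_sub, mul_neg, trace_neg, Complex.neg_re, re_trace_mul_matFun_sub_matFun,
    ← Finset.sum_neg_distrib]
  refine Finset.sum_congr rfl fun j _ => ?_
  rw [← Finset.sum_neg_distrib]
  refine Finset.sum_congr rfl fun k _ => ?_
  ring

end MatFun

theorem relEntropy_eq_integral_general (d : ℕ)
    (ρ σ : Matrix (Fin d) (Fin d) ℂ) (hρ : ρ.PosDef) (hσ : σ.PosDef) :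
    relEntropy hρ.1 hσ.1 =
      ∫ t in Set.Ioi (0 : ℝ),
        (((((t : ℂ) • (1 : Matrix (Fin d) (Fin d) ℂ) + σ)⁻¹ -
            ((t : ℂ) • (1 : Matrix (Fin d) (Fin d) ℂ) + ρ)⁻¹) * ρ).trace).re := by
  rw [relEntropy, setIntegral_congr_fun measurableSet_Ioi
      fun t ht => re_trace_resolvent_sub_resolvent_mul hρ hσ ht.out.le,
    integral_Ioi_sum_sum_mul_inv_add_sub_inv_add _ hρ.eigenvalues_pos hσ.eigenvalues_pos]
  exact re_trace_mul_matFun_sub_matFun hρ.1 hσ.1 log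

/-- integral representation of the Umegaki relative entropy:
`S(ρ‖σ) = ∫₀^∞ Tr[((tI+σ)⁻¹ − (tI+ρ)⁻¹) ρ] dt`. -/
theorem relEntropy_eq_integral (d : ℕ)
    (ρ σ : Matrix (Fin d) (Fin d) ℂ) (hρ : ρ.PosDef) (hσ : σ.PosDef)
    (hρtr : ρ.trace = 1) (hσtr : σ.trace = 1) :
    relEntropy hρ.1 hσ.1 =
      ∫ t in Set.Ioi (0 : ℝ),
        (((((t : ℂ) • (1 : Matrix (Fin d) (Fin d) ℂ) + σ)⁻¹ -
            ((t : ℂ) • (1 : Matrix (Fin d) (Fin d) ℂ) + ρ)⁻¹) * ρ).trace).re :=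
  relEntropy_eq_integral_general d ρ σ hρ hσ
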